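/- arXiv:1211.3590 — 4 statements merged into one kernel-verified Lean document; each statement's English description precedes it below -/
import Mathlib

section
/- Let V be a left A-module, let μ₁, μ₂, μ₃ ∈ ℂ be nonzero, and let v₀ ∈ V satisfy K₁v₀ = μ₁v₀, K₂v₀ = μ₂v₀, K₃v₀ = μ₃v₀ and E₁v₀ = E₂v₀ = 0. Then for every ζ ∈ ℂ one has (1 − C⁽¹⁾ζ − C⁽²⁾ζ² − C⁽³⁾ζ³)v₀ = (1 − q⁻²μ₁⁻²ζ)(1 − μ₂⁻²ζ)(1 − q²μ₃⁻²ζ)v₀, where C⁽¹⁾ = q⁻²K₁⁻² + K₂⁻² + q²K₃⁻² + q⁻¹κ_q²F₁E₁K₁⁻¹K₂⁻¹ + qκ_q²F₂E₂K₂⁻¹K₃⁻¹ + qκ_q²F₃E₃K₁⁻¹K₃⁻¹ − κ_q³F₃E₁E₂K₁⁻¹K₃⁻¹, C⁽²⁾ = −q⁻²K₁⁻²K₂⁻² − K₁⁻²K₃⁻² − q²K₂⁻²K₃⁻² − qκ_q²F₁E₁K₁⁻¹K₂⁻¹K₃⁻² − q⁻¹κ_q²F₂E₂K₁⁻²K₂⁻¹K₃⁻¹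 − qκ_q²F₃E₃K₁⁻¹K₂⁻²K₃⁻¹ − qκ_q³F₁F₂E₃K₁⁻¹K₂⁻²K₃⁻¹, and C⁽³⁾ = (K₁K₂K₃)⁻². (With μ_i = q^{λ_i} this is the factorization π^λ(1 − C⁽¹⁾ζ − C⁽²⁾ζ² − C⁽³⁾ζ³) = (1 − q^{−2(λ₁+1)}ζ)(1 − q^{−2λ₂}ζ)(1 − q^{−2(λ₃−1)}ζ).) -/
/-- Factorization of the generating polynomial of the quantum Casimir elements of
`U_q(gl₃)` on a highest weight vector. -/
theorem casimir_generating_polynomial_eigenvalue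
    {A : Type*} [Ring A] [Algebra ℂ A]
    (q : ℂ) (hq0 : q ≠ 0) (hq2 : q ^ 2 ≠ 1)
    (K1 K2 K3 K1' K2' K3' E1 E2 F1 F2 E3 F3 : A)
    (hK1 : K1 * K1' = 1) (hK1' : K1' * K1 = 1)
    (hK2 : K2 * K2' = 1) (hK2' : K2' * K2 = 1)
    (hK3 : K3 * K3' = 1) (hK3' : K3' * K3 = 1)
    (hK12 : K1 * K2 = K2 * K1) (hK13 : K1 * K3 = K3 * K1) (hK23 : K2 * K3 = K3 * K2)
    (hK1E1 : K1 * E1 = q • (E1 * K1)) (hK2E1 : K2 * E1 = q⁻¹ • (E1 * K2))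
    (hK3E1 : K3 * E1 = E1 * K3)
    (hK1E2 : K1 * E2 = E2 * K1) (hK2E2 : K2 * E2 = q • (E2 * K2))
    (hK3E2 : K3 * E2 = q⁻¹ • (E2 * K3))
    (hK1F1 : K1 * F1 = q⁻¹ • (F1 * K1)) (hK2F1 : K2 * F1 = q • (F1 * K2))
    (hK3F1 : K3 * F1 = F1 * K3)
    (hK1F2 : K1 * F2 = F2 * K1) (hK2F2 : K2 * F2 = q⁻¹ • (F2 * K2))
    (hK3F2 : K3 * F2 = q • (F2 * K3))
    (hEF1 : E1 * F1 - F1 * E1 = (q - q⁻¹)⁻¹ • (K1 * K2' - K1' * K2))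
    (hEF2 : E2 * F2 - F2 * E2 = (q - q⁻¹)⁻¹ • (K2 * K3' - K2' * K3))
    (hEF12 : E1 * F2 = F2 * E1) (hEF21 : E2 * F1 = F1 * E2)
    (hSE1 : E1 ^ 2 * E2 - (q + q⁻¹) • (E1 * E2 * E1) + E2 * E1 ^ 2 = 0)
    (hSE2 : E2 ^ 2 * E1 - (q + q⁻¹) • (E2 * E1 * E2) + E1 * E2 ^ 2 = 0)
    (hSF1 : F1 ^ 2 * F2 - (q + q⁻¹) • (F1 * F2 * F1) + F2 * F1 ^ 2 = 0)
    (hSF2 : F2 ^ 2 * F1 - (q + q⁻¹) • (F2 * F1 * F2) + F1 * F2 ^ 2 = 0)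
    (hE3 : E3 = E1 * E2 - q⁻¹ • (E2 * E1))
    (hF3 : F3 = F2 * F1 - q • (F1 * F2))
    (C1 : A)
    (hC1 : C1 = (q⁻¹ ^ 2) • (K1' * K1') + K2' * K2' + (q ^ 2) • (K3' * K3')
      + (q⁻¹ * (q - q⁻¹) ^ 2) • (F1 * E1 * (K1' * K2'))
      + (q * (q - q⁻¹) ^ 2) • (F2 * E2 * (K2' * K3'))
      + (q * (q - q⁻¹) ^ 2) • (F3 * E3 * (K1' * K3'))
      - ((q - q⁻¹) ^ 3) • (F3 * E1 * E2 * (K1' * K3')))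
    (C2 : A)
    (hC2 : C2 = -((q⁻¹ ^ 2) • (K1' * K1' * (K2' * K2'))) - K1' * K1' * (K3' * K3')
      - (q ^ 2) • (K2' * K2' * (K3' * K3'))
      - (q * (q - q⁻¹) ^ 2) • (F1 * E1 * (K1' * K2' * (K3' * K3')))
      - (q⁻¹ * (q - q⁻¹) ^ 2) • (F2 * E2 * (K1' * K1' * (K2' * K3')))
      - (q * (q - q⁻¹) ^ 2) • (F3 * E3 * (K1' * (K2' * K2') * K3'))
      - (q * (q - q⁻¹) ^ 3) • (F1 * F2 * E3 * (K1' * (K2' * K2') * K3')))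
    (C3 : A)
    (hC3 : C3 = K3' * K2' * K1' * (K3' * K2' * K1'))
    {V : Type*} [AddCommGroup V] [Module A V]
    (μ1 μ2 μ3 : ℂ) (hμ1 : μ1 ≠ 0) (hμ2 : μ2 ≠ 0) (hμ3 : μ3 ≠ 0)
    (v0 : V)
    (hv1 : K1 • v0 = algebraMap ℂ A μ1 • v0)
    (hv2 : K2 • v0 = algebraMap ℂ A μ2 • v0)
    (hv3 : K3 • v0 = algebraMap ℂ A μ3 • v0)
    (hvE1 : E1 • v0 = (0 : V)) (hvE2 : E2 • v0 = (0 : V)) :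
    ∀ ζ : ℂ, ((1 : A) - ζ • C1 - (ζ ^ 2) • C2 - (ζ ^ 3) • C3) • v0
      = algebraMap ℂ A ((1 - q⁻¹ ^ 2 * μ1⁻¹ ^ 2 * ζ) * (1 - μ2⁻¹ ^ 2 * ζ)
          * (1 - q ^ 2 * μ3⁻¹ ^ 2 * ζ)) • v0 := by
  intro ζ
  have hcomm : ∀ (c : ℂ) (x : A) (v : V),
      x • ((algebraMap ℂ A c) • v) = (algebraMap ℂ A c) • (x • v) := by
    intro c x v
    rw [← mul_smul, ← Algebra.commutes c x, mul_smul]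
  have hφmul : ∀ (a b : ℂ) (v : V),
      (algebraMap ℂ A a) • ((algebraMap ℂ A b) • v) = (algebraMap ℂ A (a * b)) • v := by
    intro a b v
    rw [← mul_smul, ← map_mul]
  have hinv : ∀ (K K' : A) (μ : ℂ), μ ≠ 0 → K' * K = 1 → K • v0 = algebraMap ℂ A μ • v0 →
      K' • v0 = algebraMap ℂ A μ⁻¹ • v0 := by
    intro K K' μ hμ hKK' hv
    have h : K' • (K • v0) = K' • ((algebraMap ℂ A μ) • v0) := by rw [hv]
    rw [← mul_smul, hKK', one_smul, hcomm] at h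
    have h2 : (algebraMap ℂ A μ⁻¹) • v0 = (algebraMap ℂ A μ⁻¹) • ((algebraMap ℂ A μ) • (K' • v0)) := by
      rw [← h]
    rw [hφmul, inv_mul_cancel₀ hμ, map_one, one_smul] at h2
    exact h2.symm
  have hv1' := hinv K1 K1' μ1 hμ1 hK1' hv1
  have hv2' := hinv K2 K2' μ2 hμ2 hK2' hv2
  have hv3' := hinv K3 K3' μ3 hμ3 hK3' hv3
  have hcE1 : ∀ (c : ℂ) (v : V), E1 • ((algebraMap ℂ A c) • v) = (algebraMap ℂ A c) • (E1 • v) :=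
    fun c v => hcomm c E1 v
  have hcE2 : ∀ (c : ℂ) (v : V), E2 • ((algebraMap ℂ A c) • v) = (algebraMap ℂ A c) • (E2 • v) :=
    fun c v => hcomm c E2 v
  have hcE3 : ∀ (c : ℂ) (v : V), E3 • ((algebraMap ℂ A c) • v) = (algebraMap ℂ A c) • (E3 • v) :=
    fun c v => hcomm c E3 v
  have hcK1' : ∀ (c : ℂ) (v : V), K1' • ((algebraMap ℂ A c) • v) = (algebraMap ℂ A c) • (K1' • v) :=
    fun c v => hcomm c K1' v
  have hcK2' : ∀ (c : ℂ) (v : V), K2' • ((algebraMap ℂ A c) • v) = (algebraMap ℂ A c) • (K2' • v) :=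
    fun c v => hcomm c K2' v
  have hcK3' : ∀ (c : ℂ) (v : V), K3' • ((algebraMap ℂ A c) • v) = (algebraMap ℂ A c) • (K3' • v) :=
    fun c v => hcomm c K3' v
  have hvE3 : E3 • v0 = 0 := by
    rw [hE3, sub_smul, mul_smul, hvE2, smul_zero, Algebra.smul_def, mul_smul, mul_smul,
      hvE1, smul_zero, smul_zero, sub_zero]
  have hC1v : C1 • v0 =
      algebraMap ℂ A (q⁻¹ ^ 2 * μ1⁻¹ ^ 2 + μ2⁻¹ ^ 2 + q ^ 2 * μ3⁻¹ ^ 2) • v0 := by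
    rw [hC1]
    simp only [add_smul, sub_smul, Algebra.smul_def, mul_smul, hv1', hv2', hv3',
      hcK1', hcK2', hcK3', hcE1, hcE2, hcE3, hvE1, hvE2, hvE3, hφmul,
      smul_zero, sub_zero, add_zero, zero_add]
    simp only [← add_smul, ← map_add]
    congr 2
    ring
  have hC2v : C2 • v0 =
      algebraMap ℂ A (-(q⁻¹ ^ 2 * (μ1⁻¹ ^ 2 * μ2⁻¹ ^ 2)) - μ1⁻¹ ^ 2 * μ3⁻¹ ^ 2
        - q ^ 2 * (μ2⁻¹ ^ 2 * μ3⁻¹ ^ 2)) • v0 := by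
    rw [hC2]
    simp only [add_smul, sub_smul, neg_smul, Algebra.smul_def, mul_smul, hv1', hv2', hv3',
      hcK1', hcK2', hcK3', hcE1, hcE2, hcE3, hvE1, hvE2, hvE3, hφmul,
      smul_zero, sub_zero, add_zero, zero_add, neg_zero]
    simp only [← neg_smul, ← sub_smul, ← map_neg, ← map_sub]
    congr 2
    ring
  have hC3v : C3 • v0 =
      algebraMap ℂ A (μ1⁻¹ ^ 2 * μ2⁻¹ ^ 2 * μ3⁻¹ ^ 2) • v0 := by
    rw [hC3]
    simp only [mul_smul, hv1', hv2', hv3', hcK1', hcK2', hcK3', hφmul]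
    congr 2
    ring
  have expand : ∀ (c : ℂ) (x : A), (c • x) • v0 = (algebraMap ℂ A c) • (x • v0) := by
    intro c x
    rw [Algebra.smul_def, mul_smul]
  rw [sub_smul, sub_smul, sub_smul, one_smul, expand, expand, expand, hC1v, hC2v, hC3v,
    hφmul, hφmul, hφmul]
  have hv0one : v0 = algebraMap ℂ A 1 • v0 := by rw [map_one, one_smul]
  nth_rewrite 1 [hv0one]
  rw [← sub_smul, ← map_sub, ← sub_smul, ← map_sub, ← sub_smul, ← map_sub]
  congr 2
  linear_combination ((q⁻¹ * q + 1) * (ζ^3 * μ1⁻¹^2 * μ2⁻¹^2 * μ3⁻¹^2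
    - ζ^2 * μ1⁻¹^2 * μ3⁻¹^2)) * inv_mul_cancel₀ hq0
end

section
/- The Jimbo images ê₀ = F₃K₁⁻¹K₃⁻¹ and f̂₀ = E₃K₁K₃ of the affine generators e₀ and f₀ satisfy the affine commutation relation ê₀f̂₀ − f̂₀ê₀ = (K₃K₁⁻¹ − K₁K₃⁻¹)/κ_q (the image of [e₀, f₀] = (q^{h₀} − q^{−h₀})/κ_q under Jimbo's homomorphism U_q(L(sl₃)) → U_q(gl₃)). -/
set_option maxHeartbeats 40000000


/-- The Jimbo images of the affine generators `e₀`, `f₀` satisfy the affine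
commutation relation. -/
theorem jimbo_e0_f0_commutator
    {A : Type*} [Ring A] [Algebra ℂ A]
    (q : ℂ) (hq0 : q ≠ 0) (hq2 : q ^ 2 ≠ 1)
    (K1 K2 K3 K1' K2' K3' E1 E2 F1 F2 E3 F3 : A)
    (hK1 : K1 * K1' = 1) (hK1' : K1' * K1 = 1)
    (hK2 : K2 * K2' = 1) (hK2' : K2' * K2 = 1)
    (hK3 : K3 * K3' = 1) (hK3' : K3' * K3 = 1)
    (hK12 : K1 * K2 = K2 * K1) (hK13 : K1 * K3 = K3 * K1) (hK23 : K2 * K3 = K3 * K2)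
    (hK1E1 : K1 * E1 = q • (E1 * K1)) (hK2E1 : K2 * E1 = q⁻¹ • (E1 * K2))
    (hK3E1 : K3 * E1 = E1 * K3)
    (hK1E2 : K1 * E2 = E2 * K1) (hK2E2 : K2 * E2 = q • (E2 * K2))
    (hK3E2 : K3 * E2 = q⁻¹ • (E2 * K3))
    (hK1F1 : K1 * F1 = q⁻¹ • (F1 * K1)) (hK2F1 : K2 * F1 = q • (F1 * K2))
    (hK3F1 : K3 * F1 = F1 * K3)
    (hK1F2 : K1 * F2 = F2 * K1) (hK2F2 : K2 * F2 = q⁻¹ • (F2 * K2))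
    (hK3F2 : K3 * F2 = q • (F2 * K3))
    (hEF1 : E1 * F1 - F1 * E1 = (q - q⁻¹)⁻¹ • (K1 * K2' - K1' * K2))
    (hEF2 : E2 * F2 - F2 * E2 = (q - q⁻¹)⁻¹ • (K2 * K3' - K2' * K3))
    (hEF12 : E1 * F2 = F2 * E1) (hEF21 : E2 * F1 = F1 * E2)
    (hSE1 : E1 ^ 2 * E2 - (q + q⁻¹) • (E1 * E2 * E1) + E2 * E1 ^ 2 = 0)
    (hSE2 : E2 ^ 2 * E1 - (q + q⁻¹) • (E2 * E1 * E2) + E1 * E2 ^ 2 = 0)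
    (hSF1 : F1 ^ 2 * F2 - (q + q⁻¹) • (F1 * F2 * F1) + F2 * F1 ^ 2 = 0)
    (hSF2 : F2 ^ 2 * F1 - (q + q⁻¹) • (F2 * F1 * F2) + F1 * F2 ^ 2 = 0)
    (hE3 : E3 = E1 * E2 - q⁻¹ • (E2 * E1))
    (hF3 : F3 = F2 * F1 - q • (F1 * F2))
    (e0 f0 : A)
    (he0 : e0 = F3 * (K1' * K3'))
    (hf0 : f0 = E3 * (K1 * K3)) :
    e0 * f0 - f0 * e0 = (q - q⁻¹)⁻¹ • (K3 * K1' - K1 * K3') := by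
  subst he0 hf0 hE3 hF3
  have hqi : q⁻¹ ≠ 0 := inv_ne_zero hq0
  have hκ : q - q⁻¹ ≠ 0 := by
    intro h
    apply hq2
    have h1 : q = q⁻¹ := sub_eq_zero.mp h
    have h2 := mul_inv_cancel₀ hq0
    rw [← h1] at h2
    rw [sq]; exact h2
  -- general helpers
  have cinv : ∀ X Y Y' : A, Y*Y' = 1 → Y'*Y = 1 → X*Y = Y*X → X*Y' = Y'*X := by
    intro X Y Y' h1 h2 h3
    calc X*Y' = (Y'*Y)*(X*Y') := by rw [h2, one_mul]
      _ = Y'*((Y*X)*Y') := by noncomm_ring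
      _ = Y'*((X*Y)*Y') := by rw [← h3]
      _ = (Y'*X)*(Y*Y') := by noncomm_ring
      _ = Y'*X := by rw [h1, mul_one]
  have sinv : ∀ (K K' X : A) (s : ℂ), s ≠ 0 → K*K' = 1 → K'*K = 1 → K*X = s•(X*K) →
      K'*X = s⁻¹•(X*K') := by
    intro K K' X s hs h1 h2 h3
    have h4 : X*K = s⁻¹ • (K*X) := by rw [h3, smul_smul, inv_mul_cancel₀ hs, one_smul]
    calc K'*X = (K'*X)*(K*K') := by rw [h1, mul_one]
      _ = K'*((X*K)*K') := by noncomm_ring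
      _ = K'*((s⁻¹•(K*X))*K') := by rw [h4]
      _ = s⁻¹ • ((K'*K)*(X*K')) := by rw [smul_mul_assoc, mul_smul_comm]; congr 1; noncomm_ring
      _ = s⁻¹ • (X*K') := by rw [h2, one_mul]
  have comm_t : ∀ X Y : A, X*Y = Y*X → ∀ t : A, X*(Y*t) = Y*(X*t) := by
    intro X Y h t; rw [← mul_assoc, h, mul_assoc]
  have scomm_t : ∀ (X Y : A) (s : ℂ), X*Y = s•(Y*X) → ∀ t : A, X*(Y*t) = s•(Y*(X*t)) := by
    intro X Y s h t; rw [← mul_assoc, h, smul_mul_assoc, mul_assoc]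
  have cancel_t : ∀ X Y : A, X*Y = 1 → ∀ t : A, X*(Y*t) = t := by
    intro X Y h t; rw [← mul_assoc, h, one_mul]
  have ef_b : ∀ (X Y Z W : A) (s : ℂ), X*Y - Y*X = s•(Z-W) → X*Y = Y*X + s•Z - s•W := by
    intro X Y Z W s h
    rw [sub_eq_iff_eq_add] at h
    rw [h, smul_sub]; abel
  have ef_t : ∀ (X Y Z W : A) (s : ℂ), X*Y - Y*X = s•(Z-W) →
      ∀ t : A, X*(Y*t) = Y*(X*t) + s•(Z*t) - s•(W*t) := by
    intro X Y Z W s h t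
    rw [← mul_assoc, ef_b X Y Z W s h]
    simp only [add_mul, sub_mul, smul_mul_assoc, mul_assoc]
  -- E/F commutation rules
  have ef1b := ef_b E1 F1 (K1*K2') (K1'*K2) _ hEF1
  have ef1t := ef_t E1 F1 (K1*K2') (K1'*K2) _ hEF1
  have ef2b := ef_b E2 F2 (K2*K3') (K2'*K3) _ hEF2
  have ef2t := ef_t E2 F2 (K2*K3') (K2'*K3) _ hEF2
  have ef12t := comm_t E1 F2 hEF12
  have ef21t := comm_t E2 F1 hEF21
  -- primed K against E/F (bare)
  have hK1'E1 : K1'*E1 = q⁻¹•(E1*K1') := sinv K1 K1' E1 q hq0 hK1 hK1' hK1E1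
  have hK2'E1 : K2'*E1 = q•(E1*K2') := by
    have h := sinv K2 K2' E1 q⁻¹ hqi hK2 hK2' hK2E1; rwa [inv_inv] at h
  have hK3'E1 : K3'*E1 = E1*K3' := (cinv E1 K3 K3' hK3 hK3' hK3E1.symm).symm
  have hK1'E2 : K1'*E2 = E2*K1' := (cinv E2 K1 K1' hK1 hK1' hK1E2.symm).symm
  have hK2'E2 : K2'*E2 = q⁻¹•(E2*K2') := sinv K2 K2' E2 q hq0 hK2 hK2' hK2E2
  have hK3'E2 : K3'*E2 = q•(E2*K3') := by
    have h := sinv K3 K3' E2 q⁻¹ hqi hK3 hK3' hK3E2; rwa [inv_inv] at h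
  have hK1'F1 : K1'*F1 = q•(F1*K1') := by
    have h := sinv K1 K1' F1 q⁻¹ hqi hK1 hK1' hK1F1; rwa [inv_inv] at h
  have hK2'F1 : K2'*F1 = q⁻¹•(F1*K2') := sinv K2 K2' F1 q hq0 hK2 hK2' hK2F1
  have hK3'F1 : K3'*F1 = F1*K3' := (cinv F1 K3 K3' hK3 hK3' hK3F1.symm).symm
  have hK1'F2 : K1'*F2 = F2*K1' := (cinv F2 K1 K1' hK1 hK1' hK1F2.symm).symm
  have hK2'F2 : K2'*F2 = q•(F2*K2') := by
    have h := sinv K2 K2' F2 q⁻¹ hqi hK2 hK2' hK2F2; rwa [inv_inv] at h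
  have hK3'F2 : K3'*F2 = q⁻¹•(F2*K3') := sinv K3 K3' F2 q hq0 hK3 hK3' hK3F2
  -- trailing forms for K against E/F
  have tK1E1 := scomm_t K1 E1 q hK1E1
  have tK2E1 := scomm_t K2 E1 q⁻¹ hK2E1
  have tK3E1 := comm_t K3 E1 hK3E1
  have tK1E2 := comm_t K1 E2 hK1E2
  have tK2E2 := scomm_t K2 E2 q hK2E2
  have tK3E2 := scomm_t K3 E2 q⁻¹ hK3E2
  have tK1F1 := scomm_t K1 F1 q⁻¹ hK1F1
  have tK2F1 := scomm_t K2 F1 q hK2F1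
  have tK3F1 := comm_t K3 F1 hK3F1
  have tK1F2 := comm_t K1 F2 hK1F2
  have tK2F2 := scomm_t K2 F2 q⁻¹ hK2F2
  have tK3F2 := scomm_t K3 F2 q hK3F2
  have tK1'E1 := scomm_t K1' E1 q⁻¹ hK1'E1
  have tK2'E1 := scomm_t K2' E1 q hK2'E1
  have tK3'E1 := comm_t K3' E1 hK3'E1
  have tK1'E2 := comm_t K1' E2 hK1'E2
  have tK2'E2 := scomm_t K2' E2 q⁻¹ hK2'E2
  have tK3'E2 := scomm_t K3' E2 q hK3'E2
  have tK1'F1 := scomm_t K1' F1 q hK1'F1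
  have tK2'F1 := scomm_t K2' F1 q⁻¹ hK2'F1
  have tK3'F1 := comm_t K3' F1 hK3'F1
  have tK1'F2 := comm_t K1' F2 hK1'F2
  have tK2'F2 := scomm_t K2' F2 q hK2'F2
  have tK3'F2 := scomm_t K3' F2 q⁻¹ hK3'F2
  -- K-K sorting (bare), canonical order K1 < K1' < K2 < K2' < K3 < K3'
  have cK2K1 : K2*K1 = K1*K2 := hK12.symm
  have cK2K1' : K2*K1' = K1'*K2 := cinv K2 K1 K1' hK1 hK1' hK12.symm
  have cK2'K1 : K2'*K1 = K1*K2' := (cinv K1 K2 K2' hK2 hK2' hK12).symm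
  have cK2'K1' : K2'*K1' = K1'*K2' := (cinv K1' K2 K2' hK2 hK2' cK2K1'.symm).symm
  have cK3K1 : K3*K1 = K1*K3 := hK13.symm
  have cK3K1' : K3*K1' = K1'*K3 := cinv K3 K1 K1' hK1 hK1' hK13.symm
  have cK3'K1 : K3'*K1 = K1*K3' := (cinv K1 K3 K3' hK3 hK3' hK13).symm
  have cK3'K1' : K3'*K1' = K1'*K3' := (cinv K1' K3 K3' hK3 hK3' cK3K1'.symm).symm
  have cK3K2 : K3*K2 = K2*K3 := hK23.symm
  have cK3K2' : K3*K2' = K2'*K3 := cinv K3 K2 K2' hK2 hK2' hK23.symm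
  have cK3'K2 : K3'*K2 = K2*K3' := (cinv K2 K3 K3' hK3 hK3' hK23).symm
  have cK3'K2' : K3'*K2' = K2'*K3' := (cinv K2' K3 K3' hK3 hK3' cK3K2'.symm).symm
  -- trailing K-K sorting
  have sK2K1 := comm_t K2 K1 cK2K1
  have sK2K1' := comm_t K2 K1' cK2K1'
  have sK2'K1 := comm_t K2' K1 cK2'K1
  have sK2'K1' := comm_t K2' K1' cK2'K1'
  have sK3K1 := comm_t K3 K1 cK3K1
  have sK3K1' := comm_t K3 K1' cK3K1'
  have sK3'K1 := comm_t K3' K1 cK3'K1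
  have sK3'K1' := comm_t K3' K1' cK3'K1'
  have sK3K2 := comm_t K3 K2 cK3K2
  have sK3K2' := comm_t K3 K2' cK3K2'
  have sK3'K2 := comm_t K3' K2 cK3'K2
  have sK3'K2' := comm_t K3' K2' cK3'K2'
  -- trailing cancellations
  have x1 := cancel_t K1 K1' hK1
  have x1' := cancel_t K1' K1 hK1'
  have x2 := cancel_t K2 K2' hK2
  have x2' := cancel_t K2' K2 hK2'
  have x3 := cancel_t K3 K3' hK3
  have x3' := cancel_t K3' K3 hK3'
  simp only [mul_add, add_mul, mul_sub, sub_mul, smul_mul_assoc, mul_smul_comm, smul_sub,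
    smul_add, smul_smul, mul_assoc, mul_one, one_mul,
    ef1t, ef1b, ef2t, ef2b, ef12t, hEF12, ef21t, hEF21,
    tK1E1, tK2E1, tK3E1, tK1E2, tK2E2, tK3E2, tK1F1, tK2F1, tK3F1, tK1F2, tK2F2, tK3F2,
    tK1'E1, tK2'E1, tK3'E1, tK1'E2, tK2'E2, tK3'E2, tK1'F1, tK2'F1, tK3'F1, tK1'F2, tK2'F2, tK3'F2,
    hK1E1, hK2E1, hK3E1, hK1E2, hK2E2, hK3E2, hK1F1, hK2F1, hK3F1, hK1F2, hK2F2, hK3F2,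
    hK1'E1, hK2'E1, hK3'E1, hK1'E2, hK2'E2, hK3'E2, hK1'F1, hK2'F1, hK3'F1, hK1'F2, hK2'F2, hK3'F2,
    sK2K1, sK2K1', sK2'K1, sK2'K1', sK3K1, sK3K1', sK3'K1, sK3'K1', sK3K2, sK3K2', sK3'K2, sK3'K2',
    cK2K1, cK2K1', cK2'K1, cK2'K1', cK3K1, cK3K1', cK3'K1, cK3'K1', cK3K2, cK3K2', cK3'K2, cK3'K2',
    x1, x1', x2, x2', x3, x3', hK1, hK1', hK2, hK2', hK3, hK3']
  have h2 : (-1 + q ^ 2) ≠ 0 := fun h => hq2 (by linear_combination h)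
  have h3 : (-q + q ^ 3) ≠ 0 := by
    have hm := mul_ne_zero hq0 h2
    intro h; exact hm (by linear_combination h)
  have h4 : (1 - q ^ 2 * 2 + q ^ 4) ≠ 0 := by
    have hm := mul_ne_zero h2 h2
    intro h; exact hm (by linear_combination h)
  clear * - q hq0 hq2 h2 h3 h4
  match_scalars
  all_goals try field_simp [h2, h3, h4]
  all_goals (
    first
    | ring1
    | linear_combination (-((-1+q^2)⁻¹)) * mul_inv_cancel₀ h3 +
        (q * (-q+q^3)⁻¹) * mul_inv_cancel₀ h2
    | linear_combination ((-1+q^2)⁻¹) * mul_inv_cancel₀ h3 -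
        (q * (-q+q^3)⁻¹) * mul_inv_cancel₀ h2
    | linear_combination (q * (-1+q^2)⁻¹) * mul_inv_cancel₀ h4 -
        (q * (-1+q^2) * (1-q^2*2+q^4)⁻¹) * mul_inv_cancel₀ h2
    | linear_combination (-(q * (-1+q^2)⁻¹)) * mul_inv_cancel₀ h4 +
        (q * (-1+q^2) * (1-q^2*2+q^4)⁻¹) * mul_inv_cancel₀ h2)
end

section
/- The Jimbo images ê₀ = F₃K₁⁻¹K₃⁻¹ and f̂₀ = E₃K₁K₃ satisfy the affine quantum Serre relations: for each i ∈ {1, 2}, ê₀²E_i − [2]_q ê₀E_iê₀ + E_iê₀² = 0, E_i²ê₀ − [2]_q E_iê₀E_i + ê₀E_i² = 0, f̂₀²F_i − [2]_q f̂₀F_if̂₀ + F_if̂₀² = 0, and F_i²f̂₀ − [2]_q F_if̂₀F_i + f̂₀F_i² = 0. -/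
section JimboAux

variable {A : Type*} [Ring A] [Algebra ℂ A]

private lemma rearr1 {M : Type*} [AddCommGroup M] {x y z : M} (h : x - y + z = 0) :
    x = y - z := by
  rw [eq_sub_iff_add_eq]
  rw [sub_add_eq_add_sub, sub_eq_zero] at h
  exact h

private lemma rearr2 {M : Type*} [AddCommGroup M] {x y z : M} (h : x - y + z = 0) :
    z = y - x := by
  rw [eq_sub_iff_add_eq]
  rw [sub_add_eq_add_sub, sub_eq_zero, add_comm] at h
  exact h

private lemma sc_flip {K X : A} {a b : ℂ} (ha : a ≠ 0) (hb : b = a⁻¹)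
    (h : K * X = a • (X * K)) : X * K = b • (K * X) := by
  subst hb
  rw [h, smul_smul, inv_mul_cancel₀ ha, one_smul]

private lemma sc_inv {K K' X : A} {a b : ℂ} (ha : a ≠ 0) (hb : b = a⁻¹)
    (h : K * X = a • (X * K)) (h1 : K' * K = 1) (h2 : K * K' = 1) :
    K' * X = b • (X * K') := by
  subst hb
  have hXK : X * K = a⁻¹ • (K * X) := sc_flip ha rfl h
  calc K' * X = K' * (X * (K * K')) := by rw [h2, mul_one]
    _ = K' * ((X * K) * K') := by rw [mul_assoc]
    _ = K' * ((a⁻¹ • (K * X)) * K') := by rw [hXK]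
    _ = a⁻¹ • (((K' * K) * X) * K') := by
        rw [smul_mul_assoc, mul_smul_comm, ← mul_assoc K' (K * X) K', ← mul_assoc]
    _ = a⁻¹ • (X * K') := by rw [h1, one_mul]

private lemma sc_mulK {K L X : A} {a b c : ℂ} (hc : c = a * b)
    (hK : K * X = a • (X * K)) (hL : L * X = b • (X * L)) :
    (K * L) * X = c • (X * (K * L)) := by
  subst hc
  calc K * L * X = K * (L * X) := mul_assoc ..
    _ = K * (b • (X * L)) := by rw [hL]
    _ = b • ((K * X) * L) := by rw [mul_smul_comm, ← mul_assoc]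
    _ = b • ((a • (X * K)) * L) := by rw [hK]
    _ = (a * b) • (X * (K * L)) := by
        rw [smul_mul_assoc, smul_smul, mul_assoc, mul_comm b a]

private lemma sc_mulX {K X Y : A} {a b c : ℂ} (hc : c = a * b)
    (hX : K * X = a • (X * K)) (hY : K * Y = b • (Y * K)) :
    K * (X * Y) = c • ((X * Y) * K) := by
  subst hc
  calc K * (X * Y) = (K * X) * Y := (mul_assoc ..).symm
    _ = a • (X * (K * Y)) := by rw [hX, smul_mul_assoc, mul_assoc]
    _ = a • (X * (b • (Y * K))) := by rw [hY]
    _ = (a * b) • (X * Y * K) := by rw [mul_smul_comm, smul_smul, ← mul_assoc]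

private lemma sc_sub {K X Y : A} {a : ℂ} (d : ℂ)
    (hX : K * X = a • (X * K)) (hY : K * Y = a • (Y * K)) :
    K * (X - d • Y) = a • ((X - d • Y) * K) := by
  rw [mul_sub, sub_mul, smul_sub, hX, mul_smul_comm, hY, smul_mul_assoc,
    smul_smul, smul_smul, mul_comm d a]

private lemma sc_T {K X Y : A} {a b c : ℂ} (d : ℂ) (hc : c = a * b)
    (hX : K * X = a • (X * K)) (hY : K * Y = b • (Y * K)) :
    K * (X * Y - d • (Y * X)) = c • ((X * Y - d • (Y * X)) * K) :=
  sc_sub d (sc_mulX hc hX hY) (sc_mulX (by rw [hc, mul_comm]) hY hX)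

private lemma sc_scale {E V : A} {c : ℂ} (d : ℂ) (h : E * V = c • (V * E)) :
    E * (d • V) = c • ((d • V) * E) := by
  rw [mul_smul_comm, h, smul_mul_assoc, smul_smul, smul_smul, mul_comm d c]

private lemma sc_scale' {V T : A} {c : ℂ} (d : ℂ) (h : V * T = c • (T * V)) :
    (d • V) * T = c • (T * (d • V)) := by
  rw [smul_mul_assoc, h, mul_smul_comm, smul_smul, smul_smul, mul_comm d c]

private lemma serre_key (q a : ℂ) {L T E W e0 : A}
    (hA : a * a - (q + q⁻¹) * a + 1 = 0)
    (h1 : L * T = T * L)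
    (h2 : L * E = a • (E * L))
    (h3 : E * T = T * E + W)
    (h4 : W * T = (a * a) • (T * W))
    (h5 : E * W = (a * a) • (W * E))
    (he0 : e0 = T * L) :
    (e0 ^ 2 * E - (q + q⁻¹) • (e0 * E * e0) + E * e0 ^ 2 = 0) ∧
    (E ^ 2 * e0 - (q + q⁻¹) • (E * e0 * E) + e0 * E ^ 2 = 0) := by
  subst he0
  have h1' : ∀ x : A, L * (T * x) = T * (L * x) := fun x => by
    rw [← mul_assoc, h1, mul_assoc]
  have h2' : ∀ x : A, L * (E * x) = a • (E * (L * x)) := fun x => by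
    rw [← mul_assoc, h2, smul_mul_assoc, mul_assoc]
  have hET' : ∀ x : A, E * (T * x) = T * (E * x) + W * x := fun x => by
    rw [← mul_assoc, h3, add_mul, mul_assoc]
  have hTET' : ∀ x : A, T * (E * (T * x)) = T * (T * (E * x)) + T * (W * x) := fun x => by
    rw [hET' x, mul_add]
  have hETT' : ∀ x : A, E * (T * (T * x))
      = T * (T * (E * x)) + T * (W * x) + (a * a) • (T * (W * x)) := fun x => by
    calc E * (T * (T * x)) = T * (E * (T * x)) + W * (T * x) := hET' (T * x)
      _ = T * (T * (E * x)) + T * (W * x) + (W * T) * x := by rw [hTET' x, mul_assoc]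
      _ = _ := by rw [h4, smul_mul_assoc, mul_assoc]
  have hEET' : ∀ x : A, E * (E * (T * x))
      = T * (E * (E * x)) + W * (E * x) + (a * a) • (W * (E * x)) := fun x => by
    calc E * (E * (T * x)) = E * (T * (E * x) + W * x) := by rw [hET' x]
      _ = E * (T * (E * x)) + (E * W) * x := by rw [mul_add, mul_assoc]
      _ = T * (E * (E * x)) + W * (E * x) + (a * a) • (W * (E * x)) := by
          rw [hET' (E * x), h5, smul_mul_assoc, mul_assoc]
  constructor
  · simp only [pow_two, mul_assoc]
    simp only [h1', h2', h1, h2, mul_smul_comm, smul_smul]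
    rw [hETT' (L * L), hTET' (L * L)]
    match_scalars <;> linear_combination hA
  · simp only [pow_two, mul_assoc]
    simp only [h1', h2', h1, h2, mul_smul_comm, smul_smul]
    rw [hEET' L, hET' (E * L)]
    match_scalars <;> linear_combination hA

end JimboAux

set_option maxHeartbeats 1600000 in
/-- The Jimbo images of the affine generators `e₀`, `f₀` satisfy the affine
quantum Serre relations. -/
theorem jimbo_e0_f0_serre
    {A : Type*} [Ring A] [Algebra ℂ A]
    (q : ℂ) (hq0 : q ≠ 0) (hq2 : q ^ 2 ≠ 1)
    (K1 K2 K3 K1' K2' K3' E1 E2 F1 F2 E3 F3 : A)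
    (hK1 : K1 * K1' = 1) (hK1' : K1' * K1 = 1)
    (hK2 : K2 * K2' = 1) (hK2' : K2' * K2 = 1)
    (hK3 : K3 * K3' = 1) (hK3' : K3' * K3 = 1)
    (hK12 : K1 * K2 = K2 * K1) (hK13 : K1 * K3 = K3 * K1) (hK23 : K2 * K3 = K3 * K2)
    (hK1E1 : K1 * E1 = q • (E1 * K1)) (hK2E1 : K2 * E1 = q⁻¹ • (E1 * K2))
    (hK3E1 : K3 * E1 = E1 * K3)
    (hK1E2 : K1 * E2 = E2 * K1) (hK2E2 : K2 * E2 = q • (E2 * K2))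
    (hK3E2 : K3 * E2 = q⁻¹ • (E2 * K3))
    (hK1F1 : K1 * F1 = q⁻¹ • (F1 * K1)) (hK2F1 : K2 * F1 = q • (F1 * K2))
    (hK3F1 : K3 * F1 = F1 * K3)
    (hK1F2 : K1 * F2 = F2 * K1) (hK2F2 : K2 * F2 = q⁻¹ • (F2 * K2))
    (hK3F2 : K3 * F2 = q • (F2 * K3))
    (hEF1 : E1 * F1 - F1 * E1 = (q - q⁻¹)⁻¹ • (K1 * K2' - K1' * K2))
    (hEF2 : E2 * F2 - F2 * E2 = (q - q⁻¹)⁻¹ • (K2 * K3' - K2' * K3))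
    (hEF12 : E1 * F2 = F2 * E1) (hEF21 : E2 * F1 = F1 * E2)
    (hSE1 : E1 ^ 2 * E2 - (q + q⁻¹) • (E1 * E2 * E1) + E2 * E1 ^ 2 = 0)
    (hSE2 : E2 ^ 2 * E1 - (q + q⁻¹) • (E2 * E1 * E2) + E1 * E2 ^ 2 = 0)
    (hSF1 : F1 ^ 2 * F2 - (q + q⁻¹) • (F1 * F2 * F1) + F2 * F1 ^ 2 = 0)
    (hSF2 : F2 ^ 2 * F1 - (q + q⁻¹) • (F2 * F1 * F2) + F1 * F2 ^ 2 = 0)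
    (hE3 : E3 = E1 * E2 - q⁻¹ • (E2 * E1))
    (hF3 : F3 = F2 * F1 - q • (F1 * F2))
    (e0 f0 : A)
    (he0 : e0 = F3 * (K1' * K3'))
    (hf0 : f0 = E3 * (K1 * K3)) :
    (e0 ^ 2 * E1 - (q + q⁻¹) • (e0 * E1 * e0) + E1 * e0 ^ 2 = 0) ∧
    (E1 ^ 2 * e0 - (q + q⁻¹) • (E1 * e0 * E1) + e0 * E1 ^ 2 = 0) ∧
    (e0 ^ 2 * E2 - (q + q⁻¹) • (e0 * E2 * e0) + E2 * e0 ^ 2 = 0) ∧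
    (E2 ^ 2 * e0 - (q + q⁻¹) • (E2 * e0 * E2) + e0 * E2 ^ 2 = 0) ∧
    (f0 ^ 2 * F1 - (q + q⁻¹) • (f0 * F1 * f0) + F1 * f0 ^ 2 = 0) ∧
    (F1 ^ 2 * f0 - (q + q⁻¹) • (F1 * f0 * F1) + f0 * F1 ^ 2 = 0) ∧
    (f0 ^ 2 * F2 - (q + q⁻¹) • (f0 * F2 * f0) + F2 * f0 ^ 2 = 0) ∧
    (F2 ^ 2 * f0 - (q + q⁻¹) • (F2 * f0 * F2) + f0 * F2 ^ 2 = 0) := by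
  have hqi : q⁻¹ ≠ 0 := inv_ne_zero hq0
  have hκ : q - q⁻¹ ≠ 0 := by
    intro h
    apply hq2
    have h' : q = q⁻¹ := sub_eq_zero.mp h
    have : q ^ 2 = q * q := pow_two q
    rw [this]
    nth_rewrite 2 [h']
    exact mul_inv_cancel₀ hq0
  have hne : (q * q - 1 : ℂ) ≠ 0 := by
    intro h; exact hq2 (by linear_combination h)
  -- smul forms of the trivial commutation relations
  have hK3E1' : K3 * E1 = (1 : ℂ) • (E1 * K3) := by rw [one_smul]; exact hK3E1
  have hK1E2' : K1 * E2 = (1 : ℂ) • (E2 * K1) := by rw [one_smul]; exact hK1E2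
  have hK3F1' : K3 * F1 = (1 : ℂ) • (F1 * K3) := by rw [one_smul]; exact hK3F1
  have hK1F2' : K1 * F2 = (1 : ℂ) • (F2 * K1) := by rw [one_smul]; exact hK1F2
  -- inverse Cartan commutation relations
  have iK1E1 : K1' * E1 = q⁻¹ • (E1 * K1') := sc_inv hq0 rfl hK1E1 hK1' hK1
  have iK1E2 : K1' * E2 = (1 : ℂ) • (E2 * K1') := sc_inv one_ne_zero (by norm_num) hK1E2' hK1' hK1
  have iK1F1 : K1' * F1 = q • (F1 * K1') := sc_inv hqi (by rw [inv_inv]) hK1F1 hK1' hK1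
  have iK1F2 : K1' * F2 = (1 : ℂ) • (F2 * K1') := sc_inv one_ne_zero (by norm_num) hK1F2' hK1' hK1
  have iK2E1 : K2' * E1 = q • (E1 * K2') := sc_inv hqi (by rw [inv_inv]) hK2E1 hK2' hK2
  have iK2E2 : K2' * E2 = q⁻¹ • (E2 * K2') := sc_inv hq0 rfl hK2E2 hK2' hK2
  have iK2F1 : K2' * F1 = q⁻¹ • (F1 * K2') := sc_inv hq0 rfl hK2F1 hK2' hK2
  have iK2F2 : K2' * F2 = q • (F2 * K2') := sc_inv hqi (by rw [inv_inv]) hK2F2 hK2' hK2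
  have iK3E1 : K3' * E1 = (1 : ℂ) • (E1 * K3') := sc_inv one_ne_zero (by norm_num) hK3E1' hK3' hK3
  have iK3E2 : K3' * E2 = q • (E2 * K3') := sc_inv hqi (by rw [inv_inv]) hK3E2 hK3' hK3
  have iK3F1 : K3' * F1 = (1 : ℂ) • (F1 * K3') := sc_inv one_ne_zero (by norm_num) hK3F1' hK3' hK3
  have iK3F2 : K3' * F2 = q⁻¹ • (F2 * K3') := sc_inv hq0 rfl hK3F2 hK3' hK3
  -- composite Cartan products
  have cLE1 : (K1' * K3') * E1 = q⁻¹ • (E1 * (K1' * K3')) := sc_mulK (by ring) iK1E1 iK3E1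
  have cLE2 : (K1' * K3') * E2 = q • (E2 * (K1' * K3')) := sc_mulK (by ring) iK1E2 iK3E2
  have cLF1 : (K1' * K3') * F1 = q • (F1 * (K1' * K3')) := sc_mulK (by ring) iK1F1 iK3F1
  have cLF2 : (K1' * K3') * F2 = q⁻¹ • (F2 * (K1' * K3')) := sc_mulK (by ring) iK1F2 iK3F2
  have cME1 : (K1 * K3) * E1 = q • (E1 * (K1 * K3)) := sc_mulK (by ring) hK1E1 hK3E1'
  have cME2 : (K1 * K3) * E2 = q⁻¹ • (E2 * (K1 * K3)) := sc_mulK (by ring) hK1E2' hK3E2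
  have cMF1 : (K1 * K3) * F1 = q⁻¹ • (F1 * (K1 * K3)) := sc_mulK (by ring) hK1F1 hK3F1'
  have cMF2 : (K1 * K3) * F2 = q • (F2 * (K1 * K3)) := sc_mulK (by ring) hK1F2' hK3F2
  have cP1E1 : (K1 * K2') * E1 = (q * q) • (E1 * (K1 * K2')) := sc_mulK rfl hK1E1 iK2E1
  have cP1E2 : (K1 * K2') * E2 = q⁻¹ • (E2 * (K1 * K2')) := sc_mulK (by ring) hK1E2' iK2E2
  have cP1F1 : (K1 * K2') * F1 = (q⁻¹ * q⁻¹) • (F1 * (K1 * K2')) := sc_mulK rfl hK1F1 iK2F1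
  have cP1F2 : (K1 * K2') * F2 = q • (F2 * (K1 * K2')) := sc_mulK (by ring) hK1F2' iK2F2
  have cP2E1 : (K1' * K2) * E1 = (q⁻¹ * q⁻¹) • (E1 * (K1' * K2)) := sc_mulK rfl iK1E1 hK2E1
  have cP2E2 : (K1' * K2) * E2 = q • (E2 * (K1' * K2)) := sc_mulK (by ring) iK1E2 hK2E2
  have cP2F1 : (K1' * K2) * F1 = (q * q) • (F1 * (K1' * K2)) := sc_mulK rfl iK1F1 hK2F1
  have cP2F2 : (K1' * K2) * F2 = q⁻¹ • (F2 * (K1' * K2)) := sc_mulK (by ring) iK1F2 hK2F2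
  have cP3E1 : (K2' * K3) * E1 = q • (E1 * (K2' * K3)) := sc_mulK (by ring) iK2E1 hK3E1'
  have cP3E2 : (K2' * K3) * E2 = (q⁻¹ * q⁻¹) • (E2 * (K2' * K3)) := sc_mulK rfl iK2E2 hK3E2
  have cP3F1 : (K2' * K3) * F1 = q⁻¹ • (F1 * (K2' * K3)) := sc_mulK (by ring) iK2F1 hK3F1'
  have cP3F2 : (K2' * K3) * F2 = (q * q) • (F2 * (K2' * K3)) := sc_mulK rfl iK2F2 hK3F2
  have cP4E1 : (K2 * K3') * E1 = q⁻¹ • (E1 * (K2 * K3')) := sc_mulK (by ring) hK2E1 iK3E1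
  have cP4E2 : (K2 * K3') * E2 = (q * q) • (E2 * (K2 * K3')) := sc_mulK rfl hK2E2 iK3E2
  have cP4F1 : (K2 * K3') * F1 = q • (F1 * (K2 * K3')) := sc_mulK (by ring) hK2F1 iK3F1
  have cP4F2 : (K2 * K3') * F2 = (q⁻¹ * q⁻¹) • (F2 * (K2 * K3')) := sc_mulK rfl hK2F2 iK3F2
  -- composite Cartan vs E3, F3
  have cLF3 : (K1' * K3') * F3 = (1 : ℂ) • (F3 * (K1' * K3')) := by
    rw [hF3]; exact sc_T q (by field_simp) cLF2 cLF1
  have cME3 : (K1 * K3) * E3 = (1 : ℂ) • (E3 * (K1 * K3)) := by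
    rw [hE3]; exact sc_T q⁻¹ (by field_simp) cME1 cME2
  have cP1F3 : (K1 * K2') * F3 = q⁻¹ • (F3 * (K1 * K2')) := by
    rw [hF3]; exact sc_T q (by field_simp) cP1F2 cP1F1
  have cP2E3 : (K1' * K2) * E3 = q⁻¹ • (E3 * (K1' * K2)) := by
    rw [hE3]; exact sc_T q⁻¹ (by field_simp) cP2E1 cP2E2
  have cP3F3 : (K2' * K3) * F3 = q • (F3 * (K2' * K3)) := by
    rw [hF3]; exact sc_T q (by field_simp) cP3F2 cP3F1
  have cP4E3 : (K2 * K3') * E3 = q • (E3 * (K2 * K3')) := by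
    rw [hE3]; exact sc_T q⁻¹ (by field_simp) cP4E1 cP4E2
  have hLF3 : (K1' * K3') * F3 = F3 * (K1' * K3') := by rw [cLF3, one_smul]
  have hME3 : (K1 * K3) * E3 = E3 * (K1 * K3) := by rw [cME3, one_smul]
  -- rearranged Serre relations
  have sE1 : E2 * (E1 * E1) = (q + q⁻¹) • (E1 * (E2 * E1)) - E1 * (E1 * E2) := by
    have h := hSE1; simp only [pow_two, mul_assoc] at h; exact rearr2 h
  have sE2 : E2 * (E2 * E1) = (q + q⁻¹) • (E2 * (E1 * E2)) - E1 * (E2 * E2) := by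
    have h := hSE2; simp only [pow_two, mul_assoc] at h; exact rearr1 h
  have sF1 : F2 * (F1 * F1) = (q + q⁻¹) • (F1 * (F2 * F1)) - F1 * (F1 * F2) := by
    have h := hSF1; simp only [pow_two, mul_assoc] at h; exact rearr2 h
  have sF2 : F2 * (F2 * F1) = (q + q⁻¹) • (F2 * (F1 * F2)) - F1 * (F2 * F2) := by
    have h := hSF2; simp only [pow_two, mul_assoc] at h; exact rearr1 h
  -- q-commutation consequences of the Serre relations
  have S1 : F3 * F2 = q • (F2 * F3) := by
    rw [hF3]
    simp only [sub_mul, mul_sub, smul_mul_assoc, mul_smul_comm, smul_sub, smul_smul, mul_assoc]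
    rw [sF2]
    match_scalars <;> (try field_simp [hne]) <;> (try ring)
  have S2 : F1 * F3 = q • (F3 * F1) := by
    rw [hF3]
    simp only [sub_mul, mul_sub, smul_mul_assoc, mul_smul_comm, smul_sub, smul_smul, mul_assoc]
    rw [sF1]
    match_scalars <;> (try field_simp [hne]) <;> (try ring)
  have S3 : E3 * E2 = q • (E2 * E3) := by
    rw [hE3]
    simp only [sub_mul, mul_sub, smul_mul_assoc, mul_smul_comm, smul_sub, smul_smul, mul_assoc]
    rw [sE2]
    match_scalars <;> (try field_simp [hne]) <;> (try ring)
  have S4 : E1 * E3 = q • (E3 * E1) := by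
    rw [hE3]
    simp only [sub_mul, mul_sub, smul_mul_assoc, mul_smul_comm, smul_sub, smul_smul, mul_assoc]
    rw [sE1]
    match_scalars <;> (try field_simp [hne]) <;> (try ring)
  -- commutator forms of the E-F relations
  have hc1 : E1 * F1 = F1 * E1 + (q - q⁻¹)⁻¹ • (K1 * K2' - K1' * K2) := by
    rw [← hEF1]; abel
  have hd1 : F1 * E1 = E1 * F1 - (q - q⁻¹)⁻¹ • (K1 * K2' - K1' * K2) := by
    rw [← hEF1]; abel
  have hc2 : E2 * F2 = F2 * E2 + (q - q⁻¹)⁻¹ • (K2 * K3' - K2' * K3) := by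
    rw [← hEF2]; abel
  have hd2 : F2 * E2 = E2 * F2 - (q - q⁻¹)⁻¹ • (K2 * K3' - K2' * K3) := by
    rw [← hEF2]; abel
  -- the four mixed commutators
  have hh3₁ : E1 * F3 = F3 * E1 + ((-q) • (F2 * (K1 * K2'))) := by
    have e1 : E1 * (F2 * F1)
        = F2 * (F1 * E1) + F2 * ((q - q⁻¹)⁻¹ • (K1 * K2' - K1' * K2)) := by
      rw [← mul_assoc, hEF12, mul_assoc, hc1, mul_add]
    have e2 : E1 * (F1 * F2)
        = F1 * (F2 * E1) + ((q - q⁻¹)⁻¹ • (K1 * K2' - K1' * K2)) * F2 := by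
      rw [← mul_assoc, hc1, add_mul, mul_assoc, hEF12]
    rw [hF3, mul_sub, sub_mul, mul_smul_comm, smul_mul_assoc, e1, e2]
    simp only [smul_mul_assoc, mul_smul_comm, sub_mul, mul_sub, smul_sub, smul_smul]
    rw [cP1F2, cP2F2]
    simp only [smul_smul, mul_assoc]
    match_scalars <;> (try field_simp [hne]) <;> (try ring)
  have hh3₂ : E2 * F3 = F3 * E2 + F1 * (K2' * K3) := by
    have e1 : E2 * (F2 * F1)
        = F2 * (F1 * E2) + ((q - q⁻¹)⁻¹ • (K2 * K3' - K2' * K3)) * F1 := by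
      rw [← mul_assoc, hc2, add_mul, mul_assoc, hEF21]
    have e2 : E2 * (F1 * F2)
        = F1 * (F2 * E2) + F1 * ((q - q⁻¹)⁻¹ • (K2 * K3' - K2' * K3)) := by
      rw [← mul_assoc, hEF21, mul_assoc, hc2, mul_add]
    rw [hF3, mul_sub, sub_mul, mul_smul_comm, smul_mul_assoc, e1, e2]
    simp only [smul_mul_assoc, mul_smul_comm, sub_mul, mul_sub, smul_sub, smul_smul]
    rw [cP4F1, cP3F1]
    simp only [smul_smul, mul_assoc]
    match_scalars <;> (try field_simp [hne]) <;> (try ring)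
  have hh3₃ : F1 * E3 = E3 * F1 + E2 * (K1' * K2) := by
    have e1 : F1 * (E1 * E2)
        = E1 * (E2 * F1) - ((q - q⁻¹)⁻¹ • (K1 * K2' - K1' * K2)) * E2 := by
      rw [← mul_assoc, hd1, sub_mul, mul_assoc, ← hEF21]
    have e2 : F1 * (E2 * E1)
        = E2 * (E1 * F1) - E2 * ((q - q⁻¹)⁻¹ • (K1 * K2' - K1' * K2)) := by
      rw [← mul_assoc, ← hEF21, mul_assoc, hd1, mul_sub]
    rw [hE3, mul_sub, sub_mul, mul_smul_comm, smul_mul_assoc, e1, e2]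
    simp only [smul_mul_assoc, mul_smul_comm, sub_mul, mul_sub, smul_sub, smul_smul]
    rw [cP1E2, cP2E2]
    simp only [smul_smul, mul_assoc]
    match_scalars <;> (try field_simp [hne]) <;> (try ring)
  have hh3₄ : F2 * E3 = E3 * F2 + ((-q⁻¹) • (E1 * (K2 * K3'))) := by
    have e1 : F2 * (E1 * E2)
        = E1 * (E2 * F2) - E1 * ((q - q⁻¹)⁻¹ • (K2 * K3' - K2' * K3)) := by
      rw [← mul_assoc, ← hEF12, mul_assoc, hd2, mul_sub]
    have e2 : F2 * (E2 * E1)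
        = E2 * (E1 * F2) - ((q - q⁻¹)⁻¹ • (K2 * K3' - K2' * K3)) * E1 := by
      rw [← mul_assoc, hd2, sub_mul, mul_assoc, ← hEF12]
    rw [hE3, mul_sub, sub_mul, mul_smul_comm, smul_mul_assoc, e1, e2]
    simp only [smul_mul_assoc, mul_smul_comm, sub_mul, mul_sub, smul_sub, smul_smul]
    rw [cP4E1, cP3E1]
    simp only [smul_smul, mul_assoc]
    match_scalars <;> (try field_simp [hne]) <;> (try ring)
  -- q-commutation of the commutator tails
  have hX1 : (F2 * (K1 * K2')) * F3 = (q⁻¹ * q⁻¹) • (F3 * (F2 * (K1 * K2'))) := by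
    rw [mul_assoc, cP1F3, mul_smul_comm, ← mul_assoc]
    rw [← mul_assoc F3 F2 (K1 * K2'), S1]
    simp only [smul_mul_assoc, mul_smul_comm, smul_smul]
    try match_scalars <;> (try field_simp) <;> (try ring)
  have hX2 : E1 * (F2 * (K1 * K2')) = (q⁻¹ * q⁻¹) • ((F2 * (K1 * K2')) * E1) := by
    rw [← mul_assoc, hEF12]
    rw [mul_assoc F2 (K1 * K2') E1, cP1E1]
    rw [mul_assoc F2 E1 (K1 * K2')]
    simp only [smul_mul_assoc, mul_smul_comm, smul_smul]
    try match_scalars <;> (try field_simp) <;> (try ring)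
  have hY1 : (F1 * (K2' * K3)) * F3 = (q * q) • (F3 * (F1 * (K2' * K3))) := by
    rw [mul_assoc, cP3F3, mul_smul_comm, ← mul_assoc]
    rw [S2, ← mul_assoc F3 F1 (K2' * K3)]
    simp only [smul_mul_assoc, mul_smul_comm, smul_smul]
    try match_scalars <;> (try field_simp) <;> (try ring)
  have hY2 : E2 * (F1 * (K2' * K3)) = (q * q) • ((F1 * (K2' * K3)) * E2) := by
    rw [← mul_assoc, hEF21, mul_assoc F1 E2 (K2' * K3)]
    rw [mul_assoc F1 (K2' * K3) E2, cP3E2]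
    simp only [smul_mul_assoc, mul_smul_comm, smul_smul]
    try match_scalars <;> (try field_simp) <;> (try ring)
  have hU1 : (E2 * (K1' * K2)) * E3 = (q⁻¹ * q⁻¹) • (E3 * (E2 * (K1' * K2))) := by
    rw [mul_assoc, cP2E3, mul_smul_comm, ← mul_assoc]
    rw [← mul_assoc E3 E2 (K1' * K2), S3]
    simp only [smul_mul_assoc, mul_smul_comm, smul_smul]
    try match_scalars <;> (try field_simp) <;> (try ring)
  have hU2 : F1 * (E2 * (K1' * K2)) = (q⁻¹ * q⁻¹) • ((E2 * (K1' * K2)) * F1) := by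
    rw [← mul_assoc, ← hEF21, mul_assoc E2 F1 (K1' * K2)]
    rw [mul_assoc E2 (K1' * K2) F1, cP2F1]
    simp only [smul_mul_assoc, mul_smul_comm, smul_smul]
    try match_scalars <;> (try field_simp) <;> (try ring)
  have hV1 : (E1 * (K2 * K3')) * E3 = (q * q) • (E3 * (E1 * (K2 * K3'))) := by
    rw [mul_assoc, cP4E3, mul_smul_comm, ← mul_assoc]
    rw [S4, ← mul_assoc E3 E1 (K2 * K3')]
    simp only [smul_mul_assoc, mul_smul_comm, smul_smul]
    try match_scalars <;> (try field_simp) <;> (try ring)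
  have hV2 : F2 * (E1 * (K2 * K3')) = (q * q) • ((E1 * (K2 * K3')) * F2) := by
    rw [← mul_assoc, ← hEF12, mul_assoc E1 F2 (K2 * K3')]
    rw [mul_assoc E1 (K2 * K3') F2, cP4F2]
    simp only [smul_mul_assoc, mul_smul_comm, smul_smul]
    try match_scalars <;> (try field_simp) <;> (try ring)
  -- scalar identities
  have hAq : q * q - (q + q⁻¹) * q + 1 = 0 := by field_simp; ring
  have hAqi : q⁻¹ * q⁻¹ - (q + q⁻¹) * q⁻¹ + 1 = 0 := by field_simp; try ring
  -- assemble
  have R1 := serre_key q q⁻¹ hAqi hLF3 cLE1 hh3₁ (sc_scale' (-q) hX1) (sc_scale (-q) hX2) he0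
  have R2 := serre_key q q hAq hLF3 cLE2 hh3₂ hY1 hY2 he0
  have R3 := serre_key q q⁻¹ hAqi hME3 cMF1 hh3₃ hU1 hU2 hf0
  have R4 := serre_key q q hAq hME3 cMF2 hh3₄ (sc_scale' (-q⁻¹) hV1) (sc_scale (-q⁻¹) hV2) hf0
  exact ⟨R1.1, R1.2, R2.1, R2.2, R3.1, R3.2, R4.1, R4.2⟩
end

section
/- Let f̂_{α+kδ}, f̂_{β+kδ}, f̂_{(α+β)+kδ} ∈ Mat₃(ℂ) be defined by the recursions f̂_{γ+kδ} = [2]_q⁻¹(f̂'_{δ,γ}f̂_{γ+(k−1)δ} − f̂_{γ+(k−1)δ}f̂'_{δ,γ}) for k ≥ 1, with initial values f̂_α = E₂₁, f̂_β = E₃₂, f̂_{α+β} = f̂_βf̂_α − qf̂_αf̂_β. Then for all integers k ≥ 0: f̂_{α+kδ} = (−1)^k q^{2k} E₂₁, f̂_{β+kδ} = q^{3k} E₃₂, and f̂_{(α+β)+kδ} = (−1)^k q^{2k} E₃₁. (These are the matrices φ^{(1,0,0)}(f_{γ+kδ}) of the affine root vectors in the vector evaluation representation of U_q(L(sl₃)).)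 -/
open Matrix

/-- Matrix unit `E_{ab}` in `Mat₃(ℂ)`. -/
noncomputable def matE (a b : Fin 3) : Matrix (Fin 3) (Fin 3) ℂ :=
  Matrix.single a b 1

/-- `f̂_α = E₂₁`. -/
noncomputable def fhatα : Matrix (Fin 3) (Fin 3) ℂ := matE 1 0

/-- `f̂_β = E₃₂`. -/
noncomputable def fhatβ : Matrix (Fin 3) (Fin 3) ℂ := matE 2 1

/-- `f̂_{δ−α−β} = qE₁₃`. -/
noncomputable def fhatδαβ (q : ℂ) : Matrix (Fin 3) (Fin 3) ℂ := q • matE 0 2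

/-- `f̂_{α+β} = f̂_β f̂_α − q f̂_α f̂_β`. -/
noncomputable def fhatαβ (q : ℂ) : Matrix (Fin 3) (Fin 3) ℂ :=
  fhatβ * fhatα - q • (fhatα * fhatβ)

/-- `f̂_{δ−α} = f̂_{δ−α−β} f̂_β − q f̂_β f̂_{δ−α−β}`. -/
noncomputable def fhatδα (q : ℂ) : Matrix (Fin 3) (Fin 3) ℂ :=
  fhatδαβ q * fhatβ - q • (fhatβ * fhatδαβ q)

/-- `f̂_{δ−β} = f̂_{δ−α−β} f̂_α − q f̂_α f̂_{δ−α−β}`. -/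
noncomputable def fhatδβ (q : ℂ) : Matrix (Fin 3) (Fin 3) ℂ :=
  fhatδαβ q * fhatα - q • (fhatα * fhatδαβ q)

/-- `f̂'_{δ,α} = f̂_{δ−α} f̂_α − q² f̂_α f̂_{δ−α}`. -/
noncomputable def fhatδ'α (q : ℂ) : Matrix (Fin 3) (Fin 3) ℂ :=
  fhatδα q * fhatα - (q ^ 2) • (fhatα * fhatδα q)

/-- `f̂'_{δ,β} = f̂_{δ−β} f̂_β − q² f̂_β f̂_{δ−β}`. -/
noncomputable def fhatδ'β (q : ℂ) : Matrix (Fin 3) (Fin 3) ℂ :=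
  fhatδβ q * fhatβ - (q ^ 2) • (fhatβ * fhatδβ q)

/-- `f̂'_{δ,α+β} = f̂_{δ−α−β} f̂_{α+β} − q² f̂_{α+β} f̂_{δ−α−β}`. -/
noncomputable def fhatδ'αβ (q : ℂ) : Matrix (Fin 3) (Fin 3) ℂ :=
  fhatδαβ q * fhatαβ q - (q ^ 2) • (fhatαβ q * fhatδαβ q)

/-- `f̂_{α+kδ}`, via the recursion
`f̂_{α+kδ} = [2]_q⁻¹ (f̂'_{δ,α} f̂_{α+(k−1)δ} − f̂_{α+(k−1)δ} f̂'_{δ,α})`. -/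
noncomputable def fhatαk (q : ℂ) : ℕ → Matrix (Fin 3) (Fin 3) ℂ
  | 0 => fhatα
  | k + 1 => (q + q⁻¹)⁻¹ • (fhatδ'α q * fhatαk q k - fhatαk q k * fhatδ'α q)

/-- `f̂_{β+kδ}`. -/
noncomputable def fhatβk (q : ℂ) : ℕ → Matrix (Fin 3) (Fin 3) ℂ
  | 0 => fhatβ
  | k + 1 => (q + q⁻¹)⁻¹ • (fhatδ'β q * fhatβk q k - fhatβk q k * fhatδ'β q)

/-- `f̂_{(α+β)+kδ}`. -/
noncomputable def fhatαβk (q : ℂ) : ℕ → Matrix (Fin 3) (Fin 3) ℂ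
  | 0 => fhatαβ q
  | k + 1 => (q + q⁻¹)⁻¹ • (fhatδ'αβ q * fhatαβk q k - fhatαβk q k * fhatδ'αβ q)

lemma commα (q : ℂ) :
    fhatδ'α q * matE 1 0 - matE 1 0 * fhatδ'α q = (-(q ^ 3 + q)) • matE 1 0 := by
  ext i j
  fin_cases i <;> fin_cases j <;>
    simp [fhatδ'α, fhatδα, fhatδαβ, fhatα, fhatβ, matE, Matrix.mul_apply,
      Fin.sum_univ_three, Matrix.single] <;> ring

lemma commβ (q : ℂ) :
    fhatδ'β q * matE 2 1 - matE 2 1 * fhatδ'β q = (q ^ 4 + q ^ 2) • matE 2 1 := by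
  ext i j
  fin_cases i <;> fin_cases j <;>
    simp [fhatδ'β, fhatδβ, fhatδαβ, fhatα, fhatβ, matE, Matrix.mul_apply,
      Fin.sum_univ_three, Matrix.single] <;> ring

lemma commαβ (q : ℂ) :
    fhatδ'αβ q * matE 2 0 - matE 2 0 * fhatδ'αβ q = (-(q ^ 3 + q)) • matE 2 0 := by
  ext i j
  fin_cases i <;> fin_cases j <;>
    simp [fhatδ'αβ, fhatαβ, fhatδαβ, fhatα, fhatβ, matE, Matrix.mul_apply,
      Fin.sum_univ_three, Matrix.single] <;> ring

lemma fhatαβ_eq (q : ℂ) : fhatαβ q = matE 2 0 := by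
  ext i j
  fin_cases i <;> fin_cases j <;>
    simp [fhatαβ, fhatα, fhatβ, matE, Matrix.mul_apply,
      Fin.sum_univ_three, Matrix.single]

lemma comm_smul (D M : Matrix (Fin 3) (Fin 3) ℂ) (c : ℂ) :
    D * (c • M) - (c • M) * D = c • (D * M - M * D) := by
  simp [Matrix.mul_smul, Matrix.smul_mul, smul_sub]

/-- Closed formulas for the affine root vectors `f_{γ+kδ}`, `γ ∈ {α, β, α+β}`, in
the vector evaluation representation of `U_q(L(sl₃))`. -/
theorem affine_root_vectors_vector_rep
    (q : ℂ) (hq0 : q ≠ 0) (hq2 : q ^ 2 ≠ 1) (hq2' : q ^ 2 ≠ -1) :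
    ∀ k : ℕ,
      fhatαk q k = ((-1 : ℂ) ^ k * q ^ (2 * k)) • matE 1 0 ∧
      fhatβk q k = (q ^ (3 * k) : ℂ) • matE 2 1 ∧
      fhatαβk q k = ((-1 : ℂ) ^ k * q ^ (2 * k)) • matE 2 0 := by
  intro k
  have hsum : q + q⁻¹ ≠ 0 := by
    intro h
    apply hq2'
    have : q * (q + q⁻¹) = q ^ 2 + 1 := by field_simp
    have h2 : q ^ 2 + 1 = 0 := by rw [← this, h, mul_zero]
    linear_combination h2
  have hC : (1 : ℂ) + q ^ 2 ≠ 0 := by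
    intro h; apply hq2'; linear_combination h
  have e1 : (q + q⁻¹)⁻¹ * -(q ^ 3 + q) = -q ^ 2 := by
    rw [inv_mul_eq_div, div_eq_iff hsum]; field_simp
  have e2 : (q + q⁻¹)⁻¹ * (q ^ 4 + q ^ 2) = q ^ 3 := by
    rw [inv_mul_eq_div, div_eq_iff hsum]; field_simp
  induction k with
  | zero =>
    refine ⟨by simp [fhatαk, fhatα, matE], by simp [fhatβk, fhatβ, matE], ?_⟩
    show fhatαβ q = _
    simpa using fhatαβ_eq q
  | succ k ih =>
    obtain ⟨h1, h2, h3⟩ := ih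
    refine ⟨?_, ?_, ?_⟩
    · show (q + q⁻¹)⁻¹ • (fhatδ'α q * fhatαk q k - fhatαk q k * fhatδ'α q) = _
      rw [h1, comm_smul, commα, smul_smul, smul_smul]
      congr 1
      linear_combination ((-1 : ℂ) ^ k * q ^ (2 * k)) * e1
    · show (q + q⁻¹)⁻¹ • (fhatδ'β q * fhatβk q k - fhatβk q k * fhatδ'β q) = _
      rw [h2, comm_smul, commβ, smul_smul, smul_smul]
      congr 1
      linear_combination (q ^ (3 * k) : ℂ) * e2
    · show (q + q⁻¹)⁻¹ • (fhatδ'αβ q * fhatαβk q k - fhatαβk q k * fhatδ'αβ q) = _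
      rw [h3, comm_smul, commαβ, smul_smul, smul_smul]
      congr 1
      linear_combination ((-1 : ℂ) ^ k * q ^ (2 * k)) * e1
end
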